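/- Each reduced signed series-parallel graph of depth at most 2 is switching equivalent to a string. -/

import Mathlib

/-!
Signed multigraphs (parallel edges allowed), two-terminal graphs,
series/parallel connections and flows, following the terminology of
Kaiser–Rollová, "Nowhere-zero flows in signed series-parallel graphs".

Vertices and edges are labelled by natural numbers.  An edge `e` has the
two endvertices `fst e` and `snd e` (its two half-edges are the ends at
`fst e` and at `snd e`), and `sign e = true` means that `e` is positive.
-/

/-- The value `+1` (pointing towards its endvertex) or `-1` (pointing away)
of a Boolean direction of a half-edge. -/
def dirVal (b : Bool) : ℤ := if b then 1 else -1

/-- A signed multigraph. -/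
structure SignedGraph where
  verts : Finset ℕ
  edges : Finset ℕ
  fst : ℕ → ℕ
  snd : ℕ → ℕ
  sign : ℕ → Bool
  fst_mem : ∀ e ∈ edges, fst e ∈ verts
  snd_mem : ∀ e ∈ edges, snd e ∈ verts

namespace SignedGraph

/-- Edge `e` joins the vertices `u` and `v`. -/
def Joins (G : SignedGraph) (e u v : ℕ) : Prop :=
  (G.fst e = u ∧ G.snd e = v) ∨ (G.fst e = v ∧ G.snd e = u)

/-- `u` and `v` are adjacent (joined by some edge). -/
def Adj (G : SignedGraph) (u v : ℕ) : Prop := ∃ e ∈ G.edges, G.Joins e u v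

/-- The degree of a vertex (each incidence of an edge counts once,
so loops count twice). -/
def degree (G : SignedGraph) (v : ℕ) : ℕ :=
  ∑ e ∈ G.edges, ((if G.fst e = v then 1 else 0) + (if G.snd e = v then 1 else 0))

/-- `e` and `f` are parallel edges: distinct edges joining the same
pair of vertices. -/
def Parallel (G : SignedGraph) (e f : ℕ) : Prop :=
  e ≠ f ∧ ((G.fst e = G.fst f ∧ G.snd e = G.snd f) ∨
           (G.fst e = G.snd f ∧ G.snd e = G.fst f))

/-- `v` is contained in a 2-cycle (a cycle formed by two parallel edges). -/
def In2Cycle (G : SignedGraph) (v : ℕ) : Prop :=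
  ∃ e ∈ G.edges, ∃ f ∈ G.edges, G.Parallel e f ∧ G.fst e ≠ G.snd e ∧
    (G.fst e = v ∨ G.snd e = v)

/-- `beta G` is the number of distinct 2-cycles of `G`. -/
def beta (G : SignedGraph) : ℕ :=
  ((G.edges ×ˢ G.edges).filter fun p => p.1 < p.2 ∧ G.fst p.1 ≠ G.snd p.1 ∧
     ((G.fst p.1 = G.fst p.2 ∧ G.snd p.1 = G.snd p.2) ∨
      (G.fst p.1 = G.snd p.2 ∧ G.snd p.1 = G.fst p.2))).card

/-- An orientation of a signed graph: `o₁ e` (resp. `o₂ e`) tells whether the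
half-edge of `e` at `fst e` (resp. at `snd e`) points towards its endvertex.
Of the two half-edges of a positive edge exactly one points towards its
endvertex, while for a negative edge none or both do. -/
def IsOrientation (G : SignedGraph) (o₁ o₂ : ℕ → Bool) : Prop :=
  ∀ e ∈ G.edges, (G.sign e = true → o₁ e ≠ o₂ e) ∧ (G.sign e = false → o₁ e = o₂ e)

/-- The excess (inflow minus outflow) at a vertex `v`. -/
def excess (G : SignedGraph) (o₁ o₂ : ℕ → Bool) (φ : ℕ → ℤ) (v : ℕ) : ℤ :=
  ∑ e ∈ G.edges, ((if G.fst e = v then dirVal (o₁ e) * φ e else 0) +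
                  (if G.snd e = v then dirVal (o₂ e) * φ e else 0))

/-- `(o₁, o₂, φ)` is a nowhere-zero `k`-flow on `G`: an orientation together
with a valuation of the edges by nonzero integers of absolute value less
than `k` such that at every vertex the inflow equals the outflow. -/
structure IsNZFlow (G : SignedGraph) (k : ℕ) (o₁ o₂ : ℕ → Bool) (φ : ℕ → ℤ) : Prop where
  orient : G.IsOrientation o₁ o₂
  nonzero : ∀ e ∈ G.edges, φ e ≠ 0
  bounded : ∀ e ∈ G.edges, |φ e| < (k : ℤ)
  conserve : ∀ v ∈ G.verts, G.excess o₁ o₂ φ v = 0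

/-- `G` admits a nowhere-zero `k`-flow. -/
def HasNZFlow (G : SignedGraph) (k : ℕ) : Prop := ∃ o₁ o₂ φ, G.IsNZFlow k o₁ o₂ φ

/-- `G` is flow-admissible: it admits a nowhere-zero `k`-flow for some `k`. -/
def FlowAdmissible (G : SignedGraph) : Prop := ∃ k, G.HasNZFlow k

/-- `(vs, es)` is a cycle of `G`: distinct vertices `vs = [v₀, …, v_{m-1}]`,
distinct edges `es = [e₀, …, e_{m-1}]`, where `eᵢ` joins `vᵢ` and
`v_{i+1 (mod m)}`. -/
structure IsCycle (G : SignedGraph) (vs es : List ℕ) : Prop where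
  nonempty : es ≠ []
  len : vs.length = es.length
  vnodup : vs.Nodup
  enodup : es.Nodup
  vmem : ∀ v ∈ vs, v ∈ G.verts
  emem : ∀ e ∈ es, e ∈ G.edges
  link : ∀ i < es.length,
    G.Joins (es.getD i 0) (vs.getD i 0) (vs.getD ((i + 1) % vs.length) 0)

/-- The number of negative edges in a list of edges. -/
def negCount (G : SignedGraph) (es : List ℕ) : ℕ :=
  (es.filter fun e => G.sign e = false).length

/-- A balanced cycle: a cycle with an even number of negative edges. -/
def IsBalancedCycle (G : SignedGraph) (vs es : List ℕ) : Prop :=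
  G.IsCycle vs es ∧ Even (G.negCount es)

/-- An unbalanced cycle: a cycle with an odd number of negative edges. -/
def IsUnbalancedCycle (G : SignedGraph) (vs es : List ℕ) : Prop :=
  G.IsCycle vs es ∧ Odd (G.negCount es)

/-- A signed graph is unbalanced if it contains an unbalanced cycle. -/
def IsUnbalanced (G : SignedGraph) : Prop := ∃ vs es, G.IsUnbalancedCycle vs es

/-- `(vs, es)` is a path of `G` (possibly trivial, i.e. a single vertex). -/
structure IsPath (G : SignedGraph) (vs es : List ℕ) : Prop where
  nonempty : vs ≠ []
  len : vs.length = es.length + 1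
  vnodup : vs.Nodup
  enodup : es.Nodup
  vmem : ∀ v ∈ vs, v ∈ G.verts
  emem : ∀ e ∈ es, e ∈ G.edges
  link : ∀ i < es.length, G.Joins (es.getD i 0) (vs.getD i 0) (vs.getD (i + 1) 0)

/-- A barbell: two edge-disjoint unbalanced cycles together with a path,
which either joins two vertex-disjoint cycles and is internally
vertex-disjoint from them, or is the trivial path at the single
common vertex of the two cycles. -/
structure IsBarbell (G : SignedGraph) (vs₁ es₁ vs₂ es₂ pvs pes : List ℕ) : Prop where
  cyc1 : G.IsUnbalancedCycle vs₁ es₁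
  cyc2 : G.IsUnbalancedCycle vs₂ es₂
  edge_disj : ∀ e ∈ es₁, e ∉ es₂
  path : G.IsPath pvs pes
  shape :
    ((∀ v ∈ vs₁, v ∉ vs₂) ∧
      pvs.getD 0 0 ∈ vs₁ ∧ pvs.getD (pvs.length - 1) 0 ∈ vs₂ ∧
      (∀ i, 0 < i → i < pvs.length - 1 → pvs.getD i 0 ∉ vs₁ ∧ pvs.getD i 0 ∉ vs₂)) ∨
    (∃ w, w ∈ vs₁ ∧ w ∈ vs₂ ∧ (∀ v ∈ vs₁, v ∈ vs₂ → v = w) ∧ pvs = [w] ∧ pes = [])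

/-- The edge `e` is contained in a signed circuit (a balanced cycle
or a barbell). -/
def InSignedCircuit (G : SignedGraph) (e : ℕ) : Prop :=
  (∃ vs es, G.IsBalancedCycle vs es ∧ e ∈ es) ∨
  (∃ vs₁ es₁ vs₂ es₂ pvs pes, G.IsBarbell vs₁ es₁ vs₂ es₂ pvs pes ∧
    (e ∈ es₁ ∨ e ∈ es₂ ∨ e ∈ pes))

/-- `H` is a subgraph of `G` (with the same labels, endvertices and signs). -/
def IsSubgraph (H G : SignedGraph) : Prop :=
  H.verts ⊆ G.verts ∧ H.edges ⊆ G.edges ∧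
  ∀ e ∈ H.edges, H.fst e = G.fst e ∧ H.snd e = G.snd e ∧ H.sign e = G.sign e

/-- Switching at a vertex `v`: the signs of all edges incident with `v`
(i.e. with exactly one end at `v`) are inverted. -/
def switchAt (G : SignedGraph) (v : ℕ) : SignedGraph where
  verts := G.verts
  edges := G.edges
  fst := G.fst
  snd := G.snd
  sign := fun e => if xor (G.fst e == v) (G.snd e == v) then !(G.sign e) else G.sign e
  fst_mem := G.fst_mem
  snd_mem := G.snd_mem

/-- Connectedness of a (nonempty) signed graph. -/
def Connected (G : SignedGraph) : Prop :=
  G.verts.Nonempty ∧ ∀ u ∈ G.verts, ∀ v ∈ G.verts, Relation.ReflTransGen G.Adj u v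

/-- Deletion of a vertex together with all incident edges. -/
def deleteVert (G : SignedGraph) (v : ℕ) : SignedGraph where
  verts := G.verts.erase v
  edges := G.edges.filter fun e => G.fst e ≠ v ∧ G.snd e ≠ v
  fst := G.fst
  snd := G.snd
  sign := G.sign
  fst_mem := by
    intro e he
    simp only [Finset.mem_filter] at he
    exact Finset.mem_erase.mpr ⟨he.2.1, G.fst_mem e he.1⟩
  snd_mem := by
    intro e he
    simp only [Finset.mem_filter] at he
    exact Finset.mem_erase.mpr ⟨he.2.2, G.snd_mem e he.1⟩

/-- `G` is 2-connected: it is connected and remains connected after the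
deletion of any single vertex. -/
def TwoConnected (G : SignedGraph) : Prop :=
  G.Connected ∧ ∀ v ∈ G.verts, (G.deleteVert v).Connected

end SignedGraph

/-- A two-terminal signed graph: a signed graph with two distinguished
distinct vertices, the source terminal `s` and the target terminal `t`. -/
structure TTGraph extends SignedGraph where
  s : ℕ
  t : ℕ
  s_mem : s ∈ verts
  t_mem : t ∈ verts
  s_ne_t : s ≠ t

namespace TTGraph

/-- Switching at a vertex of a two-terminal signed graph. -/
def switchAt (G : TTGraph) (v : ℕ) : TTGraph where
  toSignedGraph := G.toSignedGraph.switchAt v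
  s := G.s
  t := G.t
  s_mem := G.s_mem
  t_mem := G.t_mem
  s_ne_t := G.s_ne_t

end TTGraph

/-- Two two-terminal signed graphs are switching equivalent if one is
obtained from the other by a finite sequence of switchings. -/
def SwitchEquiv (G G' : TTGraph) : Prop :=
  Relation.ReflTransGen (fun A B => ∃ v ∈ A.verts, B = A.switchAt v) G G'

/-- `G` is the series connection `S(H₁, H₂)`: `H₁` and `H₂` are subgraphs
of `G` sharing exactly the vertex `H₁.t = H₂.s`, partitioning the edges,
with `G.s = H₁.s` and `G.t = H₂.t`. -/
structure IsSeriesConn2 (G H₁ H₂ : TTGraph) : Prop where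
  sub1 : SignedGraph.IsSubgraph H₁.toSignedGraph G.toSignedGraph
  sub2 : SignedGraph.IsSubgraph H₂.toSignedGraph G.toSignedGraph
  vert_union : H₁.verts ∪ H₂.verts = G.verts
  vert_inter : H₁.verts ∩ H₂.verts = {H₁.t}
  mid : H₁.t = H₂.s
  edge_union : H₁.edges ∪ H₂.edges = G.edges
  edge_disj : Disjoint H₁.edges H₂.edges
  src : G.s = H₁.s
  tgt : G.t = H₂.t

/-- `G` is the parallel connection `P(H₁, H₂)`: `H₁` and `H₂` are subgraphs
of `G` sharing exactly the two terminals, partitioning the edges, with the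
terminals of `G`, `H₁` and `H₂` identified. -/
structure IsParallelConn2 (G H₁ H₂ : TTGraph) : Prop where
  sub1 : SignedGraph.IsSubgraph H₁.toSignedGraph G.toSignedGraph
  sub2 : SignedGraph.IsSubgraph H₂.toSignedGraph G.toSignedGraph
  vert_union : H₁.verts ∪ H₂.verts = G.verts
  vert_inter : H₁.verts ∩ H₂.verts = {H₁.s, H₁.t}
  src_eq : H₁.s = H₂.s
  tgt_eq : H₁.t = H₂.t
  edge_union : H₁.edges ∪ H₂.edges = G.edges
  edge_disj : Disjoint H₁.edges H₂.edges
  src : G.s = H₁.s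
  tgt : G.t = H₁.t

/-- `G` is a (signed) copy of `K₂`: a single edge joining the two terminals. -/
def IsSignedK2 (G : TTGraph) : Prop :=
  G.verts = {G.s, G.t} ∧ ∃ e, G.edges = {e} ∧ G.toSignedGraph.Joins e G.s G.t

/-- Series-parallel two-terminal graphs: obtained from copies of `K₂` by
iterated series and parallel connections. -/
inductive IsSP : TTGraph → Prop
  | k2 {G} : IsSignedK2 G → IsSP G
  | series {G H₁ H₂} : IsSeriesConn2 G H₁ H₂ → IsSP H₁ → IsSP H₂ → IsSP G
  | parallel {G H₁ H₂} : IsParallelConn2 G H₁ H₂ → IsSP H₁ → IsSP H₂ → IsSP G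

/-- `G` is the series connection `S(H₁, …, Hₙ)` of the graphs in the list
(of length at least two). -/
inductive IsSeriesConnList : TTGraph → List TTGraph → Prop
  | two {G H₁ H₂} : IsSeriesConn2 G H₁ H₂ → IsSeriesConnList G [H₁, H₂]
  | cons {G G' H l} : IsSeriesConn2 G H G' → IsSeriesConnList G' l →
      IsSeriesConnList G (H :: l)

/-- `G` is the parallel connection `P(H₁, …, Hₙ)` of the graphs in the list
(of length at least two). -/
inductive IsParallelConnList : TTGraph → List TTGraph → Prop
  | two {G H₁ H₂} : IsParallelConn2 G H₁ H₂ → IsParallelConnList G [H₁, H₂]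
  | cons {G G' H l} : IsParallelConn2 G H G' → IsParallelConnList G' l →
      IsParallelConnList G (H :: l)

/-- `l` is the list of parts of `G` for a series connection: `G` is a series
connection of the series-parallel graphs in `l`, with `l` of maximum length. -/
def IsSeriesPartsOf (G : TTGraph) (l : List TTGraph) : Prop :=
  IsSeriesConnList G l ∧ (∀ H ∈ l, IsSP H) ∧
  ∀ l', IsSeriesConnList G l' → (∀ H ∈ l', IsSP H) → l'.length ≤ l.length

/-- `l` is the list of parts of `G` for a parallel connection. -/
def IsParallelPartsOf (G : TTGraph) (l : List TTGraph) : Prop :=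
  IsParallelConnList G l ∧ (∀ H ∈ l, IsSP H) ∧
  ∀ l', IsParallelConnList G l' → (∀ H ∈ l', IsSP H) → l'.length ≤ l.length

/-- `l` is the list of parts of `G`. -/
def IsPartsOf (G : TTGraph) (l : List TTGraph) : Prop :=
  IsSeriesPartsOf G l ∨ IsParallelPartsOf G l

/-- `H` is a part of `G`. -/
def IsPart (H G : TTGraph) : Prop := ∃ l, IsPartsOf G l ∧ H ∈ l

/-- `H` is a piece of `G`: there is a sequence `H = H₀, H₁, …, Hₘ = G`
where each `Hⱼ` is a part of `H_{j+1}`; in particular `G` is a piece of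
itself. -/
def IsPiece (H G : TTGraph) : Prop := Relation.ReflTransGen IsPart H G

/-- `G` is of series type: it is a series connection of its parts. -/
def IsSeriesType (G : TTGraph) : Prop := ∃ l, IsSeriesPartsOf G l

/-- `G` is of parallel type: it is a parallel connection of its parts. -/
def IsParallelType (G : TTGraph) : Prop := ∃ l, IsParallelPartsOf G l

/-- `H` is an endpart of `G`: the first or last part of a series
decomposition of `G` into its parts. -/
def IsEndpartOf (H G : TTGraph) : Prop :=
  ∃ l, IsSeriesPartsOf G l ∧ (l.head? = some H ∨ l.getLast? = some H)

/-- `DepthLe G d`: the depth of `G` is at most `d`.  The depth of a signed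
`K₂` is `0`; otherwise it is `1` plus the maximum depth of a part. -/
inductive DepthLe : TTGraph → ℕ → Prop
  | k2 {G d} : IsSignedK2 G → DepthLe G d
  | step {G l d} : IsPartsOf G l → (∀ H ∈ l, DepthLe H d) → DepthLe G (d + 1)

/-- `HasDepth G d`: the depth of `G` is exactly `d`, i.e. `d` is the least
upper bound in the recursive definition of depth. -/
def HasDepth (G : TTGraph) (d : ℕ) : Prop :=
  DepthLe G d ∧ ∀ d' < d, ¬ DepthLe G d'

/-- `G` is reduced: each non-terminal vertex has degree at least `3`, and
no two parallel edges have the same sign. -/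
def IsReducedGraph (G : TTGraph) : Prop :=
  (∀ v ∈ G.verts, v ≠ G.s → v ≠ G.t → 3 ≤ G.toSignedGraph.degree v) ∧
  (∀ e ∈ G.edges, ∀ f ∈ G.edges, G.toSignedGraph.Parallel e f → G.sign e ≠ G.sign f)

/-- `G` is a positive `K₂` (denoted `K₂⁺`). -/
def IsPositiveK2 (G : TTGraph) : Prop :=
  IsSignedK2 G ∧ ∀ e ∈ G.edges, G.sign e = true

/-- `G` is the unbalanced 2-cycle `D`: two parallel edges of opposite signs
joining the two terminals. -/
def IsUnbalanced2Cycle (G : TTGraph) : Prop :=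
  G.verts = {G.s, G.t} ∧ ∃ e f, e ≠ f ∧ G.edges = {e, f} ∧
    G.toSignedGraph.Joins e G.s G.t ∧ G.toSignedGraph.Joins f G.s G.t ∧
    G.sign e ≠ G.sign f

/-- `G` is a string: a copy of `K₂⁺` or `D`, or a series connection of copies
of `K₂⁺` and `D`, in which every non-terminal vertex lies in a 2-cycle. -/
def IsString (G : TTGraph) : Prop :=
  (IsPositiveK2 G ∨ IsUnbalanced2Cycle G ∨
    ∃ l, IsSeriesConnList G l ∧ ∀ H ∈ l, IsPositiveK2 H ∨ IsUnbalanced2Cycle H) ∧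
  ∀ v ∈ G.verts, v ≠ G.s → v ≠ G.t → G.toSignedGraph.In2Cycle v

/-- `G` is a necklace: a parallel connection of two strings, at least one of
which is nontrivial (has more than two vertices). -/
def IsNecklace (G : TTGraph) : Prop :=
  ∃ H₁ H₂, IsParallelConn2 G H₁ H₂ ∧ IsString H₁ ∧ IsString H₂ ∧
    (2 < H₁.verts.card ∨ 2 < H₂.verts.card)

/-- `(o₁, o₂, φ)` is an `(a,b)`-pseudoflow on the two-terminal signed graph
`G`: like a nowhere-zero 6-flow, except that at the source terminal the
outflow exceeds the inflow by `a`, and at the target terminal the inflow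
exceeds the outflow by `b`. -/
structure IsPseudoflow (G : TTGraph) (a b : ℤ) (o₁ o₂ : ℕ → Bool) (φ : ℕ → ℤ) :
    Prop where
  orient : G.toSignedGraph.IsOrientation o₁ o₂
  nonzero : ∀ e ∈ G.edges, φ e ≠ 0
  bounded : ∀ e ∈ G.edges, |φ e| < 6
  conserve : ∀ v ∈ G.verts, v ≠ G.s → v ≠ G.t →
    G.toSignedGraph.excess o₁ o₂ φ v = 0
  out_s : G.toSignedGraph.excess o₁ o₂ φ G.s = -a
  in_t : G.toSignedGraph.excess o₁ o₂ φ G.t = b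

/-- `G` admits an `(a,b)`-pseudoflow. -/
def HasPseudoflow (G : TTGraph) (a b : ℤ) : Prop :=
  ∃ o₁ o₂ φ, IsPseudoflow G a b o₁ o₂ φ

/-- `I₅ = {-5, …, 5}`. -/
noncomputable def I5 : Finset ℤ := Finset.Icc (-5) 5

/-- The pair `(a,b)` is valid for `G`: `a ≠ 0` or `deg(s) ≥ 2`, and
`b ≠ 0` or `deg(t) ≥ 2`. -/
def ValidPair (G : TTGraph) (a b : ℤ) : Prop :=
  (a ≠ 0 ∨ 2 ≤ G.toSignedGraph.degree G.s) ∧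
  (b ≠ 0 ∨ 2 ≤ G.toSignedGraph.degree G.t)

/-- `G` is a flow-admissible signed series-parallel graph with no
nowhere-zero 6-flow, with the minimum number of edges among all such
graphs. -/
def MinCounterexample (G : TTGraph) : Prop :=
  IsSP G ∧ G.toSignedGraph.FlowAdmissible ∧ ¬ G.toSignedGraph.HasNZFlow 6 ∧
  ∀ G' : TTGraph, IsSP G' → G'.toSignedGraph.FlowAdmissible →
    ¬ G'.toSignedGraph.HasNZFlow 6 → G.edges.card ≤ G'.edges.card

/-- `W` is a copy of `S(K₂⁺, D, K₂⁺)`. -/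
def IsSK2DK2 (W : TTGraph) : Prop :=
  ∃ A B C, IsSeriesConnList W [A, B, C] ∧ IsPositiveK2 A ∧
    IsUnbalanced2Cycle B ∧ IsPositiveK2 C

/-- `G'` is obtained from `G` by replacing the piece `H` (with terminals
`H.s`, `H.t`) by the two-terminal graph `W`: the edges and non-terminal
vertices of `H` are removed, `W` (whose new vertices are fresh) is added,
and its terminals are identified with the terminals of `H`. -/
def IsReplacement (G H G' W : TTGraph) : Prop :=
  W.s = H.s ∧ W.t = H.t ∧ G'.s = G.s ∧ G'.t = G.t ∧
  W.verts ∩ G.verts ⊆ {H.s, H.t} ∧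
  G'.verts = (G.verts \ (H.verts \ {H.s, H.t})) ∪ W.verts ∧
  G'.edges = (G.edges \ H.edges) ∪ W.edges ∧
  Disjoint (G.edges \ H.edges) W.edges ∧
  (∀ e ∈ G.edges \ H.edges,
    G'.fst e = G.fst e ∧ G'.snd e = G.snd e ∧ G'.sign e = G.sign e) ∧
  SignedGraph.IsSubgraph W.toSignedGraph G'.toSignedGraph


/-!
Parts of a reduced graph are again reduced, because their inner vertices keep their degree. A
reduced graph of depth at most 1 is a `K₂` or `D`: two `K₂`s in series would create an inner
vertex of degree 2, and parallel edges carry distinct signs, of which there are only two. Hence a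
reduced graph of depth at most 2 is a `K₂`, a parallel connection of `K₂`s and `D`s, which
collapses to `D`, or a series connection of `K₂`s and `D`s with no two consecutive `K₂`s. In the
last case every inner vertex lies in a `D`, and switching at the source of each part that is a
negative `K₂` at that moment, working from the target back to the source, makes every `K₂`
positive.
-/

open Finset

namespace SignedGraph

variable {G H K : SignedGraph}

theorem IsSubgraph.trans (hHK : H.IsSubgraph K) (hKG : K.IsSubgraph G) : H.IsSubgraph G := by
  refine ⟨hHK.1.trans hKG.1, hHK.2.1.trans hKG.2.1, fun e he => ?_⟩
  obtain ⟨h₁, h₂, h₃⟩ := hHK.2.2 e he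
  obtain ⟨k₁, k₂, k₃⟩ := hKG.2.2 e (hHK.2.1 he)
  exact ⟨h₁.trans k₁, h₂.trans k₂, h₃.trans k₃⟩

theorem IsSubgraph.joins (h : H.IsSubgraph G) {e u v : ℕ} (he : e ∈ H.edges)
    (hj : H.Joins e u v) : G.Joins e u v := by
  obtain ⟨h₁, h₂, -⟩ := h.2.2 e he
  unfold Joins at hj ⊢
  rwa [← h₁, ← h₂]

theorem IsSubgraph.in2Cycle (h : H.IsSubgraph G) {v : ℕ} (hv : H.In2Cycle v) : G.In2Cycle v := by
  obtain ⟨e, he, f, hf, ⟨hef, hpar⟩, hne, hev⟩ := hv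
  obtain ⟨e₁, e₂, -⟩ := h.2.2 e he
  obtain ⟨f₁, f₂, -⟩ := h.2.2 f hf
  exact ⟨e, h.2.1 he, f, h.2.1 hf, ⟨hef, by rwa [← e₁, ← e₂, ← f₁, ← f₂]⟩, by rwa [← e₁, ← e₂],
    by rwa [← e₁, ← e₂]⟩

theorem Joins.parallel {e f s t : ℕ} (hef : e ≠ f) (he : G.Joins e s t)
    (hf : G.Joins f s t) : G.Parallel e f := by
  refine ⟨hef, ?_⟩
  rcases he with ⟨h₁, h₂⟩ | ⟨h₁, h₂⟩ <;> rcases hf with ⟨h₃, h₄⟩ | ⟨h₃, h₄⟩ <;> grind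

theorem Joins.fst_ne_snd {e s t : ℕ} (hst : s ≠ t) (he : G.Joins e s t) : G.fst e ≠ G.snd e := by
  rcases he with ⟨h₁, h₂⟩ | ⟨h₁, h₂⟩ <;> grind

theorem degree_eq_zero_of_notMem {v : ℕ} (hv : v ∉ G.verts) : G.degree v = 0 := by
  refine sum_eq_zero fun e he => ?_
  have h₁ : G.fst e ≠ v := fun h => hv (h ▸ G.fst_mem e he)
  have h₂ : G.snd e ≠ v := fun h => hv (h ▸ G.snd_mem e he)
  simp [h₁, h₂]

theorem degree_eq_add_of_partition (hH : H.IsSubgraph G) (hK : K.IsSubgraph G)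
    (hu : H.edges ∪ K.edges = G.edges) (hd : Disjoint H.edges K.edges) (v : ℕ) :
    G.degree v = H.degree v + K.degree v := by
  unfold degree
  rw [← hu, sum_union hd]
  congr 1
  · refine sum_congr rfl fun e he => ?_
    rw [(hH.2.2 e he).1, (hH.2.2 e he).2.1]
  · refine sum_congr rfl fun e he => ?_
    rw [(hK.2.2 e he).1, (hK.2.2 e he).2.1]

end SignedGraph

namespace TTGraph

variable {G H H₁ H₂ : TTGraph}

/-- Switching at all vertices of `S` at once. Only `S ∩ G.verts` enters, so that two sets with the
same vertices in `G` give equal graphs. -/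
def switchSet (G : TTGraph) (S : Finset ℕ) : TTGraph :=
  { G with
    sign := fun e =>
      xor (xor (decide (G.fst e ∈ S ∩ G.verts)) (decide (G.snd e ∈ S ∩ G.verts))) (G.sign e) }

theorem switchSet_congr {S S' : Finset ℕ} (h : ∀ v ∈ G.verts, v ∈ S ↔ v ∈ S') :
    G.switchSet S = G.switchSet S' := by
  have hS : S ∩ G.verts = S' ∩ G.verts := by
    ext v
    simp only [mem_inter]
    exact ⟨fun ⟨hv, hG⟩ => ⟨(h v hG).1 hv, hG⟩, fun ⟨hv, hG⟩ => ⟨(h v hG).2 hv, hG⟩⟩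
  unfold switchSet
  rw [hS]

theorem switchSet_empty (G : TTGraph) : G.switchSet ∅ = G := by
  cases G
  simp [switchSet]

theorem switchSet_insert {v : ℕ} {S : Finset ℕ} (hv : v ∈ G.verts) (hvS : v ∉ S) :
    G.switchSet (insert v S) = (G.switchSet S).switchAt v := by
  obtain ⟨G, s, t, _, _, _⟩ := G
  simp only [switchSet, switchAt, SignedGraph.switchAt, mk.injEq, SignedGraph.mk.injEq, true_and,
    and_true]
  funext e
  by_cases h₁ : G.fst e = v <;> by_cases h₂ : G.snd e = v <;> simp_all [mem_inter] <;>
    cases G.sign e <;> simp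

theorem switchEquiv_switchSet (G : TTGraph) (S : Finset ℕ) : SwitchEquiv G (G.switchSet S) := by
  suffices h : ∀ T ⊆ G.verts, SwitchEquiv G (G.switchSet T) by
    rw [G.switchSet_congr (S' := S ∩ G.verts) fun v hv => by simp [hv]]
    exact h _ inter_subset_right
  intro T hT
  induction T using Finset.induction_on with
  | empty => rw [switchSet_empty]; exact .refl
  | insert v T hvT ih =>
    obtain ⟨hv, hT⟩ := insert_subset_iff.1 hT
    exact .tail (ih hT) ⟨v, hv, switchSet_insert hv hvT⟩

theorem sign_switchSet_of_mem {S : Finset ℕ} {e : ℕ} (he : e ∈ G.edges) :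
    (G.switchSet S).sign e =
      xor (xor (decide (G.fst e ∈ S)) (decide (G.snd e ∈ S))) (G.sign e) := by
  simp [switchSet, G.fst_mem e he, G.snd_mem e he]

theorem sign_switchSet_of_joins {S : Finset ℕ} {e u v : ℕ} (he : e ∈ G.edges)
    (hj : G.toSignedGraph.Joins e u v) :
    (G.switchSet S).sign e = xor (xor (decide (u ∈ S)) (decide (v ∈ S))) (G.sign e) := by
  rw [sign_switchSet_of_mem he]
  rcases hj with ⟨rfl, rfl⟩ | ⟨rfl, rfl⟩
  · rfl
  · rw [Bool.xor_comm (decide (G.snd e ∈ S))]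

end TTGraph

theorem SignedGraph.IsSubgraph.switchSet {H G : TTGraph}
    (h : H.toSignedGraph.IsSubgraph G.toSignedGraph) (S : Finset ℕ) :
    (H.switchSet S).toSignedGraph.IsSubgraph (G.switchSet S).toSignedGraph := by
  refine ⟨h.1, h.2.1, fun e he => ?_⟩
  obtain ⟨h₁, h₂, h₃⟩ := h.2.2 e he
  refine ⟨h₁, h₂, ?_⟩
  rw [TTGraph.sign_switchSet_of_mem (G := H) he, TTGraph.sign_switchSet_of_mem (h.2.1 he), h₁, h₂,
    h₃]

theorem IsSeriesConn2.switchSet {G H₁ H₂ : TTGraph} (h : IsSeriesConn2 G H₁ H₂) (S : Finset ℕ) :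
    IsSeriesConn2 (G.switchSet S) (H₁.switchSet S) (H₂.switchSet S) :=
  ⟨h.sub1.switchSet S, h.sub2.switchSet S, h.vert_union, h.vert_inter, h.mid, h.edge_union,
    h.edge_disj, h.src, h.tgt⟩

theorem IsSeriesConnList.switchSet {G : TTGraph} {l : List TTGraph} (h : IsSeriesConnList G l)
    (S : Finset ℕ) : IsSeriesConnList (G.switchSet S) (l.map (·.switchSet S)) := by
  induction h with
  | two h => exact .two (h.switchSet S)
  | cons h _ ih => exact .cons (h.switchSet S) ih

theorem IsUnbalanced2Cycle.switchSet {H : TTGraph} (hD : IsUnbalanced2Cycle H) (S : Finset ℕ) :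
    IsUnbalanced2Cycle (H.switchSet S) := by
  obtain ⟨hv, e, f, hef, hE, hje, hjf, hsg⟩ := hD
  refine ⟨hv, e, f, hef, hE, hje, hjf, ?_⟩
  rw [TTGraph.sign_switchSet_of_joins (by simp [hE]) hje,
    TTGraph.sign_switchSet_of_joins (by simp [hE]) hjf]
  simpa using hsg

theorem IsSignedK2.switchSet_isPositiveK2 {H : TTGraph} (hK : IsSignedK2 H) {S : Finset ℕ}
    (hS : ∀ e ∈ H.edges, xor (xor (decide (H.s ∈ S)) (decide (H.t ∈ S))) (H.sign e) = true) :
    IsPositiveK2 (H.switchSet S) := by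
  obtain ⟨hv, e, hE, hj⟩ := hK
  refine ⟨⟨hv, e, hE, hj⟩, fun f hf => ?_⟩
  obtain rfl : f = e := by simpa [TTGraph.switchSet, hE] using hf
  rw [TTGraph.sign_switchSet_of_joins (by simp [hE]) hj]
  exact hS f (by simp [hE])

/-- Toggling the source alone fixes the sign of a `K₂`, while `D` survives any switching. -/
theorem exists_switchSet_of_isSignedK2_or_isUnbalanced2Cycle {H : TTGraph}
    (hH : IsSignedK2 H ∨ IsUnbalanced2Cycle H) (T : Finset ℕ) :
    ∃ S : Finset ℕ, (∀ v, v ≠ H.s → (v ∈ S ↔ v ∈ T)) ∧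
      (IsPositiveK2 (H.switchSet S) ∨ IsUnbalanced2Cycle (H.switchSet S)) := by
  rcases hH with hK | hD
  · have hts := H.s_ne_t.symm
    by_cases hpos : ∀ e ∈ H.edges, xor (decide (H.t ∈ T)) (H.sign e) = true
    · refine ⟨T.erase H.s, fun v hv => by simp [hv], Or.inl (hK.switchSet_isPositiveK2 ?_)⟩
      simpa [hts] using hpos
    · refine ⟨insert H.s T, fun v hv => by simp [hv], Or.inl (hK.switchSet_isPositiveK2 ?_)⟩
      obtain ⟨-, e, hE, -⟩ := hK
      simp only [hE, mem_singleton, forall_eq] at hpos ⊢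
      simpa [hts] using hpos
  · exact ⟨T, fun _ _ => Iff.rfl, Or.inr (hD.switchSet T)⟩

/-- `H` meets the rest of `G` only in its terminals: every inner vertex of `H` is an inner vertex
of `G`, and all of its edges in `G` belong to `H`. -/
structure AttachedAtTerminals (H G : TTGraph) : Prop where
  sub : H.toSignedGraph.IsSubgraph G.toSignedGraph
  inner : ∀ v ∈ H.verts, v ≠ H.s → v ≠ H.t →
    v ≠ G.s ∧ v ≠ G.t ∧ G.toSignedGraph.degree v = H.toSignedGraph.degree v

namespace AttachedAtTerminals

variable {G H K : TTGraph}

theorem trans (hHK : AttachedAtTerminals H K) (hKG : AttachedAtTerminals K G) :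
    AttachedAtTerminals H G := by
  refine ⟨hHK.sub.trans hKG.sub, fun v hv hvs hvt => ?_⟩
  obtain ⟨hvKs, hvKt, hdegK⟩ := hHK.inner v hv hvs hvt
  obtain ⟨hvGs, hvGt, hdegG⟩ := hKG.inner v (hHK.sub.1 hv) hvKs hvKt
  exact ⟨hvGs, hvGt, hdegG.trans hdegK⟩

theorem of_partition (hH : H.toSignedGraph.IsSubgraph G.toSignedGraph)
    (hK : K.toSignedGraph.IsSubgraph G.toSignedGraph) (hu : H.edges ∪ K.edges = G.edges)
    (hd : Disjoint H.edges K.edges) (hHK : ∀ v ∈ H.verts, v ∈ K.verts → v = H.s ∨ v = H.t)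
    (hs : G.s = H.s ∨ G.s ∈ K.verts) (ht : G.t = H.t ∨ G.t ∈ K.verts) :
    AttachedAtTerminals H G := by
  refine ⟨hH, fun v hv hvs hvt => ?_⟩
  have hvK : v ∉ K.verts := fun hvK => (hHK v hv hvK).elim hvs hvt
  refine ⟨?_, ?_, ?_⟩
  · rintro rfl
    exact hs.elim hvs hvK
  · rintro rfl
    exact ht.elim hvt hvK
  · rw [SignedGraph.degree_eq_add_of_partition hH hK hu hd,
      SignedGraph.degree_eq_zero_of_notMem hvK, add_zero]

end AttachedAtTerminals

theorem IsReducedGraph.of_attachedAtTerminals {H G : TTGraph} (hred : IsReducedGraph G)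
    (h : AttachedAtTerminals H G) : IsReducedGraph H := by
  refine ⟨fun v hv hvs hvt => ?_, fun e he f hf hef => ?_⟩
  · obtain ⟨hvGs, hvGt, hdeg⟩ := h.inner v hv hvs hvt
    exact hdeg ▸ hred.1 v (h.sub.1 hv) hvGs hvGt
  · obtain ⟨e₁, e₂, e₃⟩ := h.sub.2.2 e he
    obtain ⟨f₁, f₂, f₃⟩ := h.sub.2.2 f hf
    have hpar : G.toSignedGraph.Parallel e f := by
      unfold SignedGraph.Parallel at hef ⊢
      rwa [← e₁, ← e₂, ← f₁, ← f₂]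
    rw [e₃, f₃]
    exact hred.2 e (h.sub.2.1 he) f (h.sub.2.1 hf) hpar

namespace IsSeriesConn2

variable {G H₁ H₂ : TTGraph}

theorem degree_eq_add (h : IsSeriesConn2 G H₁ H₂) (v : ℕ) :
    G.toSignedGraph.degree v = H₁.toSignedGraph.degree v + H₂.toSignedGraph.degree v :=
  SignedGraph.degree_eq_add_of_partition h.sub1 h.sub2 h.edge_union h.edge_disj v

theorem eq_mid_of_mem (h : IsSeriesConn2 G H₁ H₂) {v : ℕ} (h₁ : v ∈ H₁.verts)
    (h₂ : v ∈ H₂.verts) : v = H₁.t := by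
  simpa [h.vert_inter] using mem_inter.2 ⟨h₁, h₂⟩

theorem src_notMem_right (h : IsSeriesConn2 G H₁ H₂) : G.s ∉ H₂.verts := fun hs =>
  H₁.s_ne_t (h.src ▸ h.eq_mid_of_mem (h.src ▸ H₁.s_mem) hs)

theorem degree_src (h : IsSeriesConn2 G H₁ H₂) :
    G.toSignedGraph.degree G.s = H₁.toSignedGraph.degree H₁.s := by
  rw [h.degree_eq_add, SignedGraph.degree_eq_zero_of_notMem h.src_notMem_right, add_zero, h.src]

theorem attachedAtTerminals_left (h : IsSeriesConn2 G H₁ H₂) : AttachedAtTerminals H₁ G :=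
  .of_partition h.sub1 h.sub2 h.edge_union h.edge_disj
    (fun _ hv₁ hv₂ => Or.inr (h.eq_mid_of_mem hv₁ hv₂)) (Or.inl h.src)
    (Or.inr (h.tgt ▸ H₂.t_mem))

theorem attachedAtTerminals_right (h : IsSeriesConn2 G H₁ H₂) : AttachedAtTerminals H₂ G :=
  .of_partition h.sub2 h.sub1 (by rw [union_comm, h.edge_union]) h.edge_disj.symm
    (fun _ hv₂ hv₁ => Or.inl ((h.eq_mid_of_mem hv₁ hv₂).trans h.mid)) (Or.inr (h.src ▸ H₁.s_mem))
    (Or.inl h.tgt)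

end IsSeriesConn2

namespace IsParallelConn2

variable {G H₁ H₂ : TTGraph}

theorem eq_terminal_of_mem (h : IsParallelConn2 G H₁ H₂) {v : ℕ} (h₁ : v ∈ H₁.verts)
    (h₂ : v ∈ H₂.verts) : v = H₁.s ∨ v = H₁.t := by
  simpa [h.vert_inter] using mem_inter.2 ⟨h₁, h₂⟩

theorem attachedAtTerminals_left (h : IsParallelConn2 G H₁ H₂) : AttachedAtTerminals H₁ G :=
  .of_partition h.sub1 h.sub2 h.edge_union h.edge_disj (fun _ => h.eq_terminal_of_mem)
    (Or.inl h.src) (Or.inl h.tgt)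

theorem attachedAtTerminals_right (h : IsParallelConn2 G H₁ H₂) : AttachedAtTerminals H₂ G :=
  .of_partition h.sub2 h.sub1 (by rw [union_comm, h.edge_union]) h.edge_disj.symm
    (fun _ hv₂ hv₁ => h.src_eq ▸ h.tgt_eq ▸ h.eq_terminal_of_mem hv₁ hv₂)
    (Or.inl (h.src.trans h.src_eq)) (Or.inl (h.tgt.trans h.tgt_eq))

end IsParallelConn2

theorem IsSeriesConnList.attachedAtTerminals {G : TTGraph} {l : List TTGraph}
    (h : IsSeriesConnList G l) : ∀ H ∈ l, AttachedAtTerminals H G := by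
  induction h with
  | two h => simpa using ⟨h.attachedAtTerminals_left, h.attachedAtTerminals_right⟩
  | cons h _ ih =>
    exact List.forall_mem_cons.2
      ⟨h.attachedAtTerminals_left, fun H hH => (ih H hH).trans h.attachedAtTerminals_right⟩

theorem IsParallelConnList.attachedAtTerminals {G : TTGraph} {l : List TTGraph}
    (h : IsParallelConnList G l) : ∀ H ∈ l, AttachedAtTerminals H G := by
  induction h with
  | two h => simpa using ⟨h.attachedAtTerminals_left, h.attachedAtTerminals_right⟩
  | cons h _ ih =>
    exact List.forall_mem_cons.2
      ⟨h.attachedAtTerminals_left, fun H hH => (ih H hH).trans h.attachedAtTerminals_right⟩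

theorem IsPartsOf.attachedAtTerminals {G : TTGraph} {l : List TTGraph} (h : IsPartsOf G l) :
    ∀ H ∈ l, AttachedAtTerminals H G :=
  h.elim (·.1.attachedAtTerminals) (·.1.attachedAtTerminals)

def IsDipole (G : TTGraph) : Prop :=
  G.verts = {G.s, G.t} ∧ G.edges.Nonempty ∧ ∀ e ∈ G.edges, G.toSignedGraph.Joins e G.s G.t

theorem IsSignedK2.isDipole {G : TTGraph} (h : IsSignedK2 G) : IsDipole G := by
  obtain ⟨hv, e, hE, hj⟩ := h
  exact ⟨hv, ⟨e, by simp [hE]⟩, by simpa [hE] using hj⟩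

theorem IsUnbalanced2Cycle.isDipole {G : TTGraph} (h : IsUnbalanced2Cycle G) : IsDipole G := by
  obtain ⟨hv, e, f, -, hE, hje, hjf, -⟩ := h
  exact ⟨hv, ⟨e, by simp [hE]⟩, by simpa [hE] using ⟨hje, hjf⟩⟩

theorem IsParallelConn2.isDipole {G H₁ H₂ : TTGraph} (h : IsParallelConn2 G H₁ H₂)
    (h₁ : IsDipole H₁) (h₂ : IsDipole H₂) : IsDipole G ∧ 2 ≤ G.edges.card := by
  obtain ⟨hv₁, hne₁, hj₁⟩ := h₁
  obtain ⟨hv₂, hne₂, hj₂⟩ := h₂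
  have hs : G.s = H₂.s := h.src.trans h.src_eq
  have ht : G.t = H₂.t := h.tgt.trans h.tgt_eq
  refine ⟨⟨?_, ?_, fun e he => ?_⟩, ?_⟩
  · rw [← h.vert_union, hv₁, hv₂, ← h.src_eq, ← h.tgt_eq, h.src, h.tgt, union_self]
  · exact h.edge_union ▸ hne₁.mono subset_union_left
  · rcases mem_union.1 (h.edge_union ▸ he) with he | he
    · exact h.src ▸ h.tgt ▸ h.sub1.joins he (hj₁ e he)
    · exact hs ▸ ht ▸ h.sub2.joins he (hj₂ e he)
  · rw [← h.edge_union, card_union_of_disjoint h.edge_disj]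
    have := hne₁.card_pos
    have := hne₂.card_pos
    omega

theorem IsParallelConnList.isDipole {G : TTGraph} {l : List TTGraph}
    (h : IsParallelConnList G l) (hl : ∀ H ∈ l, IsDipole H) : IsDipole G ∧ 2 ≤ G.edges.card := by
  induction h with
  | two h => exact h.isDipole (hl _ (by simp)) (hl _ (by simp))
  | cons h _ ih =>
    exact h.isDipole (hl _ List.mem_cons_self)
      (ih fun H hH => hl H (List.mem_cons_of_mem _ hH)).1

/-- Parallel edges of a reduced graph have distinct signs, and there are only two signs. -/
theorem IsReducedGraph.isUnbalanced2Cycle_of_isDipole {G : TTGraph} (hred : IsReducedGraph G)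
    (hD : IsDipole G) (hcard : 2 ≤ G.edges.card) : IsUnbalanced2Cycle G := by
  obtain ⟨hv, -, hj⟩ := hD
  have hpar : ∀ e ∈ G.edges, ∀ f ∈ G.edges, e ≠ f → G.toSignedGraph.Parallel e f :=
    fun e he f hf hef => (hj e he).parallel hef (hj f hf)
  have hle : G.edges.card ≤ 2 := by
    by_contra! hlt
    obtain ⟨e, he, f, hf, hef, hsign⟩ := exists_ne_map_eq_of_card_lt_of_maps_to
      (t := (univ : Finset Bool)) (by simpa using hlt) fun e _ => mem_univ (G.sign e)
    exact hred.2 e he f hf (hpar e he f hf hef) hsign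
  obtain ⟨e, f, hef, hE⟩ := card_eq_two.1 (le_antisymm hle hcard)
  have he : e ∈ G.edges := by simp [hE]
  have hf : f ∈ G.edges := by simp [hE]
  exact ⟨hv, e, f, hef, hE, hj e he, hj f hf, hred.2 e he f hf (hpar e he f hf hef)⟩

theorem IsSignedK2.degree_s_t {G : TTGraph} (h : IsSignedK2 G) :
    G.toSignedGraph.degree G.s = 1 ∧ G.toSignedGraph.degree G.t = 1 := by
  obtain ⟨-, e, hE, hj⟩ := h
  have hst := G.s_ne_t
  unfold SignedGraph.degree
  rcases hj with ⟨h₁, h₂⟩ | ⟨h₁, h₂⟩ <;> simp [hE, h₁, h₂, hst, hst.symm]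

/-- `A.t = B.s` is an inner vertex of `G` whose edges in `G` are those of `A` and `B`. -/
def IsJunction (G A B : TTGraph) : Prop :=
  A.t = B.s ∧ A.t ∈ G.verts ∧ A.t ≠ G.s ∧ A.t ≠ G.t ∧
    G.toSignedGraph.degree A.t = A.toSignedGraph.degree A.t + B.toSignedGraph.degree B.s

theorem IsJunction.of_attachedAtTerminals {G K A B : TTGraph} (hj : IsJunction K A B)
    (hK : AttachedAtTerminals K G) : IsJunction G A B := by
  obtain ⟨hAB, hmem, hs, ht, hdeg⟩ := hj
  obtain ⟨hs', ht', hdeg'⟩ := hK.inner _ hmem hs ht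
  exact ⟨hAB, hK.sub.1 hmem, hs', ht', hdeg'.trans hdeg⟩

theorem IsJunction.not_isSignedK2 {G A B : TTGraph} (hred : IsReducedGraph G)
    (hj : IsJunction G A B) (hA : IsSignedK2 A) : ¬ IsSignedK2 B := fun hB => by
  obtain ⟨-, hmem, hs, ht, hdeg⟩ := hj
  have := hred.1 _ hmem hs ht
  rw [hdeg, hA.degree_s_t.2, hB.degree_s_t.1] at this
  omega

theorem IsSeriesConn2.isJunction {G H₁ H₂ A : TTGraph} (h : IsSeriesConn2 G H₁ H₂)
    (hs : H₂.s = A.s) (hdeg : H₂.toSignedGraph.degree H₂.s = A.toSignedGraph.degree A.s) :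
    IsJunction G H₁ A :=
  ⟨h.mid.trans hs, h.sub1.1 H₁.t_mem, h.src ▸ H₁.s_ne_t.symm, h.tgt ▸ h.mid ▸ H₂.s_ne_t,
    by rw [h.degree_eq_add, ← hdeg, ← h.mid]⟩

theorem IsSeriesConnList.exists_cons_cons {G : TTGraph} {l : List TTGraph}
    (h : IsSeriesConnList G l) : ∃ A B t, l = A :: B :: t := by
  cases h with
  | two _ => exact ⟨_, _, [], rfl⟩
  | cons _ h' => cases h' <;> exact ⟨_, _, _, rfl⟩

theorem IsSeriesConnList.src_eq_head {G A : TTGraph} {t : List TTGraph}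
    (h : IsSeriesConnList G (A :: t)) :
    G.s = A.s ∧ G.toSignedGraph.degree G.s = A.toSignedGraph.degree A.s := by
  cases h with
  | two h => exact ⟨h.src, h.degree_src⟩
  | cons h _ => exact ⟨h.src, h.degree_src⟩

theorem IsSeriesConnList.isChain_isJunction {G : TTGraph} {l : List TTGraph}
    (h : IsSeriesConnList G l) : l.IsChain (IsJunction G) := by
  induction h with
  | two h => exact List.isChain_pair.2 (h.isJunction rfl rfl)
  | cons h h' ih =>
    obtain ⟨A, B, t, rfl⟩ := h'.exists_cons_cons
    obtain ⟨hs, hdeg⟩ := h'.src_eq_head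
    exact List.isChain_cons_cons.2 ⟨h.isJunction hs hdeg,
      ih.imp fun _ _ hj => hj.of_attachedAtTerminals h.attachedAtTerminals_right⟩

theorem IsUnbalanced2Cycle.in2Cycle {H G : TTGraph} (hD : IsUnbalanced2Cycle H)
    (hsub : H.toSignedGraph.IsSubgraph G.toSignedGraph) {v : ℕ} (hv : v ∈ H.verts) :
    G.toSignedGraph.In2Cycle v := by
  obtain ⟨hverts, e, f, hef, hE, hje, hjf, -⟩ := hD
  refine hsub.in2Cycle ⟨e, by simp [hE], f, by simp [hE], hje.parallel hef hjf,
    hje.fst_ne_snd H.s_ne_t, ?_⟩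
  rw [hverts, mem_insert, mem_singleton] at hv
  rcases hje with ⟨h₁, h₂⟩ | ⟨h₁, h₂⟩ <;> rcases hv with rfl | rfl <;> simp [h₁, h₂]

theorem IsSeriesConn2.in2Cycle {G H₁ H₂ : TTGraph} (h : IsSeriesConn2 G H₁ H₂)
    (h₁ : H₁.verts = {H₁.s, H₁.t}) (hmid : G.toSignedGraph.In2Cycle H₁.t)
    (h₂ : ∀ v ∈ H₂.verts, v ≠ H₂.s → v ≠ H₂.t → H₂.toSignedGraph.In2Cycle v) :
    ∀ v ∈ G.verts, v ≠ G.s → v ≠ G.t → G.toSignedGraph.In2Cycle v := by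
  intro v hv hvs hvt
  rcases mem_union.1 (h.vert_union ▸ hv) with hv | hv
  · rw [h₁, mem_insert, mem_singleton] at hv
    rcases hv with rfl | rfl
    · exact absurd h.src.symm hvs
    · exact hmid
  · rcases eq_or_ne v H₂.s with rfl | hv₂
    · rwa [← h.mid]
    · exact h.sub2.in2Cycle (h₂ v hv hv₂ (h.tgt ▸ hvt))

/-- Every inner vertex is the junction of two consecutive parts, one of which is a `D`. -/
theorem IsSeriesConnList.in2Cycle {G : TTGraph} {l : List TTGraph} (h : IsSeriesConnList G l)
    (hl : ∀ H ∈ l, IsSignedK2 H ∨ IsUnbalanced2Cycle H)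
    (hch : l.IsChain fun A B => IsUnbalanced2Cycle A ∨ IsUnbalanced2Cycle B) :
    ∀ v ∈ G.verts, v ≠ G.s → v ≠ G.t → G.toSignedGraph.In2Cycle v := by
  induction h with
  | @two G H₁ H₂ h =>
    refine h.in2Cycle ((hl H₁ (by simp)).elim (·.1) (·.1)) ?_ fun v hv hvs hvt => ?_
    · rcases (List.isChain_pair.1 hch) with hD | hD
      · exact hD.in2Cycle h.sub1 H₁.t_mem
      · exact hD.in2Cycle h.sub2 (h.mid ▸ H₂.s_mem)
    · rw [(hl H₂ (by simp)).elim (·.1) (·.1), mem_insert, mem_singleton] at hv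
      exact absurd hv (not_or.2 ⟨hvs, hvt⟩)
  | @cons G G' H l h h' ih =>
    obtain ⟨A, _, _, rfl⟩ := h'.exists_cons_cons
    obtain ⟨hch₁, hch⟩ := List.isChain_cons_cons.1 hch
    refine h.in2Cycle ((hl H List.mem_cons_self).elim (·.1) (·.1)) ?_
      (ih (fun H' hH' => hl H' (List.mem_cons_of_mem _ hH')) hch)
    rcases hch₁ with hD | hD
    · exact hD.in2Cycle h.sub1 H.t_mem
    · rw [h.mid, h'.src_eq_head.1]
      exact hD.in2Cycle ((h'.attachedAtTerminals A List.mem_cons_self).sub.trans h.sub2) A.s_mem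

theorem IsSeriesConn2.exists_switchSet {G H₁ H₂ : TTGraph} (h : IsSeriesConn2 G H₁ H₂)
    (h₁ : IsSignedK2 H₁ ∨ IsUnbalanced2Cycle H₁) {l : List TTGraph}
    (hl : ∀ H ∈ l, H.verts ⊆ H₂.verts) {T : Finset ℕ}
    (hT : ∀ H ∈ l, IsPositiveK2 (H.switchSet T) ∨ IsUnbalanced2Cycle (H.switchSet T)) :
    ∃ S : Finset ℕ, ∀ H ∈ H₁ :: l,
      IsPositiveK2 (H.switchSet S) ∨ IsUnbalanced2Cycle (H.switchSet S) := by
  obtain ⟨S, hST, hS⟩ := exists_switchSet_of_isSignedK2_or_isUnbalanced2Cycle h₁ T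
  refine ⟨S, List.forall_mem_cons.2 ⟨hS, fun H hH => ?_⟩⟩
  rw [H.switchSet_congr fun v hv => hST v ?_]
  · exact hT H hH
  · rintro rfl
    exact h.src_notMem_right (h.src ▸ hl H hH hv)

theorem IsSeriesConnList.exists_switchSet {G : TTGraph} {l : List TTGraph}
    (h : IsSeriesConnList G l) (hl : ∀ H ∈ l, IsSignedK2 H ∨ IsUnbalanced2Cycle H) :
    ∃ S : Finset ℕ, ∀ H ∈ l,
      IsPositiveK2 (H.switchSet S) ∨ IsUnbalanced2Cycle (H.switchSet S) := by
  induction h with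
  | @two G H₁ H₂ h =>
    obtain ⟨T, -, hT⟩ := exists_switchSet_of_isSignedK2_or_isUnbalanced2Cycle (hl H₂ (by simp)) ∅
    exact h.exists_switchSet (hl H₁ (by simp)) (l := [H₂]) (by simp) (by simpa using hT)
  | cons h h' ih =>
    obtain ⟨T, hT⟩ := ih fun H hH => hl H (List.mem_cons_of_mem _ hH)
    exact h.exists_switchSet (hl _ List.mem_cons_self)
      (fun H hH => (h'.attachedAtTerminals H hH).sub.1) hT

theorem IsPositiveK2.isString {G : TTGraph} (h : IsPositiveK2 G) : IsString G :=
  ⟨Or.inl h, fun v hv hs ht => by simp [h.1.1, hs, ht] at hv⟩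

theorem IsUnbalanced2Cycle.isString {G : TTGraph} (h : IsUnbalanced2Cycle G) : IsString G :=
  ⟨Or.inr (Or.inl h), fun v hv hs ht => by simp [h.1, hs, ht] at hv⟩

theorem IsSeriesConnList.exists_switchEquiv_isString {G : TTGraph} {l : List TTGraph}
    (h : IsSeriesConnList G l) (hred : IsReducedGraph G)
    (hl : ∀ H ∈ l, IsSignedK2 H ∨ IsUnbalanced2Cycle H) :
    ∃ G' : TTGraph, SwitchEquiv G G' ∧ IsString G' := by
  have hch : l.IsChain fun A B => IsUnbalanced2Cycle A ∨ IsUnbalanced2Cycle B := by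
    refine h.isChain_isJunction.imp_of_mem_imp fun A B hA hB hj => ?_
    rcases hl A hA with hKA | hDA
    · exact Or.inr ((hl B hB).resolve_left (hj.not_isSignedK2 hred hKA))
    · exact Or.inl hDA
  obtain ⟨S, hS⟩ := h.exists_switchSet hl
  exact ⟨G.switchSet S, G.switchEquiv_switchSet S,
    Or.inr (Or.inr ⟨_, h.switchSet S, by simpa using hS⟩), h.in2Cycle hl hch⟩

theorem DepthLe.mono {G : TTGraph} {d d' : ℕ} (h : DepthLe G d) (hle : d ≤ d') : DepthLe G d' := by
  induction h generalizing d' with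
  | k2 hK => exact .k2 hK
  | step hl _ ih =>
    obtain ⟨d', rfl⟩ : ∃ e, d' = e + 1 := ⟨d' - 1, by omega⟩
    exact .step hl fun H hH => ih H hH (by omega)

theorem depthLe_zero_iff {G : TTGraph} : DepthLe G 0 ↔ IsSignedK2 G :=
  ⟨fun | .k2 hK => hK, .k2⟩

theorem depthLe_succ_iff {G : TTGraph} {d : ℕ} :
    DepthLe G (d + 1) ↔ IsSignedK2 G ∨ ∃ l, IsPartsOf G l ∧ ∀ H ∈ l, DepthLe H d :=
  ⟨fun | .k2 hK => .inl hK | .step hl hd => .inr ⟨_, hl, hd⟩,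
    fun | .inl hK => .k2 hK | .inr ⟨_, hl, hd⟩ => .step hl hd⟩

theorem IsReducedGraph.isSignedK2_or_isUnbalanced2Cycle {G : TTGraph} (hred : IsReducedGraph G)
    (hd : DepthLe G 1) : IsSignedK2 G ∨ IsUnbalanced2Cycle G := by
  rcases depthLe_succ_iff.1 hd with hK | ⟨l, hl, hparts⟩
  · exact Or.inl hK
  have hK : ∀ H ∈ l, IsSignedK2 H := fun H hH => depthLe_zero_iff.1 (hparts H hH)
  rcases hl with ⟨hser, -, -⟩ | ⟨hpar, -, -⟩
  · obtain ⟨A, B, t, rfl⟩ := hser.exists_cons_cons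
    have hj := (List.isChain_cons_cons.1 hser.isChain_isJunction).1
    exact absurd (hK B (by simp)) (hj.not_isSignedK2 hred (hK A (by simp)))
  · obtain ⟨hD, hcard⟩ := hpar.isDipole fun H hH => (hK H hH).isDipole
    exact Or.inr (hred.isUnbalanced2Cycle_of_isDipole hD hcard)

theorem reduced_depth_le_two_switch_equiv_string_general (G : TTGraph)
    (hred : IsReducedGraph G) (d : ℕ) (hd : HasDepth G d) (hd2 : d ≤ 2) :
    ∃ G' : TTGraph, SwitchEquiv G G' ∧ IsString G' := by
  rcases depthLe_succ_iff.1 (hd.1.mono hd2) with hK | ⟨l, hl, hparts⟩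
  · obtain ⟨S, -, hS⟩ := exists_switchSet_of_isSignedK2_or_isUnbalanced2Cycle (Or.inl hK) ∅
    exact ⟨G.switchSet S, G.switchEquiv_switchSet S,
      hS.elim IsPositiveK2.isString IsUnbalanced2Cycle.isString⟩
  have hshape : ∀ H ∈ l, IsSignedK2 H ∨ IsUnbalanced2Cycle H := fun H hH =>
    (hred.of_attachedAtTerminals (hl.attachedAtTerminals H hH)).isSignedK2_or_isUnbalanced2Cycle
      (hparts H hH)
  rcases hl with ⟨hser, -, -⟩ | ⟨hpar, -, -⟩
  · exact hser.exists_switchEquiv_isString hred hshape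
  · obtain ⟨hD, hcard⟩ := hpar.isDipole fun H hH =>
      (hshape H hH).elim IsSignedK2.isDipole IsUnbalanced2Cycle.isDipole
    exact ⟨G, .refl, (hred.isUnbalanced2Cycle_of_isDipole hD hcard).isString⟩

/-- Each reduced signed series-parallel graph of depth at
most 2 is switching equivalent to a string. -/
theorem reduced_depth_le_two_switch_equiv_string (G : TTGraph) (hSP : IsSP G)
    (hred : IsReducedGraph G) (d : ℕ) (hd : HasDepth G d) (hd2 : d ≤ 2) :
    ∃ G' : TTGraph, SwitchEquiv G G' ∧ IsString G' :=
  reduced_depth_le_two_switch_equiv_string_general G hred d hd hd2
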